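/- arXiv:1704.08046 — 4 statements merged into one kernel-verified Lean document; each statement's English description precedes it below -/
import Mathlib

section
/- Let d ≥ 2 and 1 ≤ n ≤ d − 1 be integers, let δ ∈ (0,1) be real, let M > 0 be real with (1−δ)M ≥ d, and set m = δM. Then Φ_d(M,m)/Φ_n(M,m) ≥ (√(2π)/e)^{d+n} · (d/n)^{2δM} · ((1−δ)/(1+δ))^{(d−n)/2}. -/
open MeasureTheory

noncomputable section

/-- `Phi d m n` is Φ_d(m,n) = (Γ((m−n)/d + 1)/Γ((m+n)/d + 1))^d. -/
def Phi (d : ℕ) (m n : ℝ) : ℝ :=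
  (Real.Gamma ((m - n) / d + 1) / Real.Gamma ((m + n) / d + 1)) ^ d

/-- The open cube κ̂ = (−1,1)^d. -/
def cube (d : ℕ) : Set (Fin d → ℝ) := Set.univ.pi fun _ => Set.Ioo (-1 : ℝ) 1

/-- The closed cube [−1,1]^d. -/
def closedCube (d : ℕ) : Set (Fin d → ℝ) := Set.univ.pi fun _ => Set.Icc (-1 : ℝ) 1

/-- Squared L²-norm over the cube. -/
def l2sq {d : ℕ} (f : (Fin d → ℝ) → ℝ) : ℝ := ∫ x in cube d, (f x) ^ 2

/-- Partial derivative in the k-th coordinate direction. -/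
def pd {d : ℕ} (k : Fin d) (f : (Fin d → ℝ) → ℝ) : (Fin d → ℝ) → ℝ :=
  fun x => fderiv ℝ f x (Pi.single k 1)

/-- Iterated partial derivative D^α. -/
def mderiv {d : ℕ} (α : Fin d → ℕ) (f : (Fin d → ℝ) → ℝ) : (Fin d → ℝ) → ℝ :=
  (List.finRange d).foldr (fun k g => (pd k)^[α k] g) f

/-- Squared Sobolev seminorm |u|²_{H^s}. -/
def Hsem (d s : ℕ) (u : (Fin d → ℝ) → ℝ) : ℝ :=
  ∑ α ∈ Finset.Nat.antidiagonalTuple d s, l2sq (mderiv α u)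

/-- Squared weighted seminorm |u|²_{V^s}. -/
def Vsem (d s : ℕ) (u : (Fin d → ℝ) → ℝ) : ℝ :=
  ∑ α ∈ Finset.Nat.antidiagonalTuple d s,
    l2sq fun x => (∏ k, (1 - x k ^ 2) ^ ((α k : ℝ) / 2)) * mderiv α u x

/-- Squared L²-norm of the gradient. -/
def gradsq {d : ℕ} (f : (Fin d → ℝ) → ℝ) : ℝ := ∑ k : Fin d, l2sq (pd k f)

/-- u is C^∞ on an open neighbourhood of [−1,1]^d. -/
def SmoothOnNbhd {d : ℕ} (u : (Fin d → ℝ) → ℝ) : Prop :=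
  ∃ U : Set (Fin d → ℝ), IsOpen U ∧ closedCube d ⊆ U ∧ ContDiffOn ℝ (⊤ : ℕ∞) u U

/-- Membership in Q_p : polynomial of degree ≤ p in each variable. -/
def IsQp (d p : ℕ) (f : (Fin d → ℝ) → ℝ) : Prop :=
  ∃ q : MvPolynomial (Fin d) ℝ, (∀ k, q.degreeOf k ≤ p) ∧ ∀ x, MvPolynomial.eval x q = f x

/-- Membership in P_p : polynomial of total degree ≤ p. -/
def IsPp (d p : ℕ) (f : (Fin d → ℝ) → ℝ) : Prop :=
  ∃ q : MvPolynomial (Fin d) ℝ, q.totalDegree ≤ p ∧ ∀ x, MvPolynomial.eval x q = f x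

/-- Superlinear degree of a monomial: sum of the exponents that are at least 2. -/
def superlinearDeg {d : ℕ} (m : Fin d →₀ ℕ) : ℕ := ∑ k, if 2 ≤ m k then m k else 0

/-- Membership in the serendipity space S_p (superlinear-degree definition). -/
def IsSp (d p : ℕ) (f : (Fin d → ℝ) → ℝ) : Prop :=
  ∃ q : MvPolynomial (Fin d) ℝ, (∀ m ∈ q.support, superlinearDeg m ≤ p) ∧
    ∀ x, MvPolynomial.eval x q = f x

/-- Membership in the 2D serendipity space S_p = P_p + span{x₁^p x₂, x₁ x₂^p}. -/
def IsSp2 (p : ℕ) (f : (Fin 2 → ℝ) → ℝ) : Prop :=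
  ∃ (q : MvPolynomial (Fin 2) ℝ) (a b : ℝ), q.totalDegree ≤ p ∧
    ∀ x, f x = MvPolynomial.eval x q + a * x 0 ^ p * x 1 + b * x 0 * x 1 ^ p

/-- `Pu` is the L²(cube)-orthogonal projection of `u` onto the subspace `{f | P f}`. -/
def IsL2Proj {d : ℕ} (P : ((Fin d → ℝ) → ℝ) → Prop) (u Pu : (Fin d → ℝ) → ℝ) : Prop :=
  P Pu ∧ ∀ v, P v → ∫ x in cube d, (u x - Pu x) * v x = 0

/-- q agrees with u at all vertices of the cube. -/
def AgreesAtVertices {d : ℕ} (u q : (Fin d → ℝ) → ℝ) : Prop :=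
  ∀ x : Fin d → ℝ, (∀ k, x k = 1 ∨ x k = -1) → q x = u x

/-- Legendre polynomial via Rodrigues' formula. -/
def legendre (n : ℕ) (x : ℝ) : ℝ :=
  (1 / ((2 : ℝ) ^ n * n.factorial)) * iteratedDeriv n (fun t : ℝ => (t ^ 2 - 1) ^ n) x

/-- Legendre coefficient a_i of u. -/
def legCoeff {d : ℕ} (u : (Fin d → ℝ) → ℝ) (i : Fin d → ℕ) : ℝ :=
  ∫ x in cube d, u x * ∏ k, ((2 * (i k : ℝ) + 1) / 2) * legendre (i k) (x k)

/-! The quotient is governed by the remainder `stirlingRem x = log Γ(x+1) - ((x + 1/2) log x - x)`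
in Stirling's formula: with the two bounds `log √(2π) ≤ stirlingRem x` for `x > 0` and
`stirlingRem x ≤ 1` for `x ≥ 1`, the Stirling main terms of `log Φ_d(M, m) - log Φ_n(M, m)` add up
exactly to `2m log (d/n) + (d - n)/2 · log ((M - m)/(M + m))`.

For the bounds, `stirlingRem x - stirlingRem (x + 1) = ∑_{k ≥ 1} (2x+1)^(-2k) / (2k+1)` is
nonnegative and decreasing in `x`, so replacing `x` by `x + N` can only decrease `stirlingRem x`
and only increase `stirlingRem x - stirlingRem 1`. For large `N`, log-convexity of `Γ` puts
`stirlingRem (x + N)` within `O(1/N)` of its value at the integer `⌊x⌋ + N`, where Stirling's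
lower bound for factorials, resp. the monotonicity at integers, applies. -/

open Real

def logStirling (x : ℝ) : ℝ := (x + 1 / 2) * log x - x

def stirlingRem (x : ℝ) : ℝ := log (Gamma (x + 1)) - logStirling x

lemma stirlingRem_sub_stirlingRem_add_one {x : ℝ} (hx : 0 < x) :
    stirlingRem x - stirlingRem (x + 1) = (x + 1 / 2) * log (1 + x⁻¹) - 1 := by
  have h1 : 1 + x⁻¹ = (x + 1) / x := by field_simp
  rw [stirlingRem, stirlingRem, logStirling, logStirling, Gamma_add_one (by positivity : x + 1 ≠ 0),
    log_mul (by positivity) (Gamma_pos_of_pos (by positivity)).ne', h1,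
    log_div (by positivity) hx.ne']
  ring

lemma hasSum_stirlingRem_sub_stirlingRem_add_one {x : ℝ} (hx : 0 < x) :
    HasSum (fun k : ℕ => (1 / (2 * x + 1)) ^ (2 * (k + 1)) / (2 * (k + 1) + 1))
      (stirlingRem x - stirlingRem (x + 1)) := by
  have hterm (k : ℕ) : (x + 1 / 2) * (2 * (1 / (2 * k + 1)) * (1 / (2 * x + 1)) ^ (2 * k + 1)) =
      (1 / (2 * x + 1)) ^ (2 * k) / (2 * k + 1) := by
    rw [pow_succ]
    field_simp
  have hsum := (hasSum_log_one_add_inv hx).mul_left (x + 1 / 2)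
  rw [← hasSum_nat_add_iff' 1] at hsum
  simp only [hterm, Finset.sum_range_one] at hsum
  rw [stirlingRem_sub_stirlingRem_add_one hx]
  simpa using hsum

lemma stirlingRem_add_one_le {x : ℝ} (hx : 0 < x) : stirlingRem (x + 1) ≤ stirlingRem x :=
  sub_nonneg.mp <| (hasSum_stirlingRem_sub_stirlingRem_add_one hx).nonneg fun _ => by positivity

lemma antitoneOn_stirlingRem_sub_stirlingRem_add_one :
    AntitoneOn (fun x => stirlingRem x - stirlingRem (x + 1)) (Set.Ioi 0) := by
  intro x hx y hy hxy
  refine hasSum_le (fun k => ?_) (hasSum_stirlingRem_sub_stirlingRem_add_one hy)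
    (hasSum_stirlingRem_sub_stirlingRem_add_one hx)
  rw [Set.mem_Ioi] at hx hy
  gcongr

lemma stirlingRem_add_nat_le {x : ℝ} (hx : 0 < x) (N : ℕ) :
    stirlingRem (x + N) ≤ stirlingRem x := by
  induction N with
  | zero => simp
  | succ N ih =>
    rw [Nat.cast_succ, ← add_assoc]
    exact (stirlingRem_add_one_le (by positivity)).trans ih

lemma stirlingRem_sub_le_stirlingRem_add_nat_sub {x y : ℝ} (hx : 0 < x) (hxy : x ≤ y)
    (N : ℕ) :
    stirlingRem y - stirlingRem x ≤ stirlingRem (y + N) - stirlingRem (x + N) := by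
  have hy : 0 < y := hx.trans_le hxy
  induction N with
  | zero => simp
  | succ N ih =>
    rw [Nat.cast_succ, ← add_assoc, ← add_assoc]
    have := antitoneOn_stirlingRem_sub_stirlingRem_add_one (a := x + N) (b := y + N)
      (Set.mem_Ioi.2 (by positivity)) (Set.mem_Ioi.2 (by positivity)) (by linarith)
    dsimp only at this
    linarith

lemma log_Gamma_add_one {x : ℝ} (hx : 0 < x) : log (Gamma (x + 1)) = log (Gamma x) + log x := by
  rw [Gamma_add_one hx.ne', log_mul hx.ne' (Gamma_pos_of_pos hx).ne', add_comm]

lemma stirlingRem_nat_add_le {n : ℕ} (hn : n ≠ 0) {u : ℝ} (hu0 : 0 ≤ u) (hu1 : u ≤ 1) :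
    stirlingRem (n + u) ≤ stirlingRem n + 1 / n := by
  have hn0 : (0 : ℝ) < n := by positivity
  rcases hu0.eq_or_lt with rfl | hu0
  · simp [hn0.le]
  have hGamma : log (Gamma (n + u + 1)) ≤ log (Gamma (n + 1)) + u * log (n + 1) := by
    have := BohrMollerup.f_add_nat_le convexOn_log_Gamma (log_Gamma_add_one ·)
      (Nat.succ_ne_zero n) hu0 hu1
    simpa only [Function.comp_apply, Nat.cast_succ, add_right_comm _ (1 : ℝ) u] using this
  have hlog_succ : log (n + 1) - log n ≤ 1 / n := by
    have := log_le_sub_one_of_pos (x := (n + 1) / n) (by positivity)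
    have hq : (n + 1) / n - 1 = 1 / (n : ℝ) := by field_simp; ring
    rwa [log_div (by positivity) hn0.ne', hq] at this
  have hlog_add : u / (n + u) ≤ log (n + u) - log n := by
    have := one_sub_inv_le_log_of_pos (x := (n + u) / n) (by positivity)
    have hq : 1 - ((n + u) / n)⁻¹ = u / (n + u) := by field_simp; ring
    rwa [log_div (by positivity) hn0.ne', hq] at this
  have h1 : u * (log (n + 1) - log n) ≤ u * (1 / n) := by gcongr
  have h2 : (n + u + 1 / 2) * (u / (n + u)) ≤ (n + u + 1 / 2) * (log (n + u) - log n) := by gcongr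
  have h3 : u * (1 / n) - (n + u + 1 / 2) * (u / (n + u)) + u ≤ 1 / n := by
    have hsplit : (n + u + 1 / 2) * (u / (n + u)) = u + u / (2 * (n + u)) := by field_simp
    have hu_div : u * (1 / n) ≤ 1 / n := mul_le_of_le_one_left (by positivity) hu1
    have : 0 ≤ u / (2 * (n + u)) := by positivity
    linarith
  unfold stirlingRem logStirling
  linarith

lemma stirlingRem_nat_le_add {n : ℕ} (hn : n ≠ 0) {u : ℝ} (hu0 : 0 ≤ u) (hu1 : u ≤ 1) :
    stirlingRem n ≤ stirlingRem (n + u) + 3 / (2 * n) := by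
  have hn0 : (0 : ℝ) < n := by positivity
  rcases hu0.eq_or_lt with rfl | hu0
  · simp only [add_zero, le_add_iff_nonneg_right]
    positivity
  have hGamma : log (Gamma (n + 1)) + u * log n ≤ log (Gamma (n + u + 1)) := by
    have := BohrMollerup.f_add_nat_ge convexOn_log_Gamma (log_Gamma_add_one ·)
      (Nat.succ_le_succ (Nat.one_le_iff_ne_zero.mpr hn)) hu0
    simpa only [Function.comp_apply, Nat.cast_succ, add_sub_cancel_right,
      add_right_comm _ (1 : ℝ) u] using this
  have hlog_add : log (n + u) - log n ≤ u / n := by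
    have := log_le_sub_one_of_pos (x := (n + u) / n) (by positivity)
    have hq : (n + u) / n - 1 = u / n := by field_simp; ring
    rwa [log_div (by positivity) hn0.ne', hq] at this
  have h1 : (n + u + 1 / 2) * (log (n + u) - log n) ≤ (n + u + 1 / 2) * (u / n) := by gcongr
  have h2 : (n + u + 1 / 2) * (u / n) - u ≤ 3 / (2 * n) := by
    have hsplit : (n + u + 1 / 2) * (u / n) - u = u * (u + 1 / 2) / n := by field_simp; ring
    rw [hsplit, ← div_div]
    exact div_le_div_of_nonneg_right (by nlinarith) hn0.le
  unfold stirlingRem logStirling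
  linarith

lemma log_two_pi_div_two_le_stirlingRem_natCast {n : ℕ} (hn : n ≠ 0) :
    log (2 * π) / 2 ≤ stirlingRem n := by
  have := Stirling.le_log_factorial_stirling hn
  rw [stirlingRem, logStirling, Gamma_nat_eq_factorial]
  linarith

lemma stirlingRem_one : stirlingRem 1 = 1 := by
  norm_num [stirlingRem, logStirling, Gamma_two]

lemma le_of_forall_le_add_div_add_one {a b c : ℝ} (h : ∀ N : ℕ, a ≤ b + c / (N + 1)) :
    a ≤ b := by
  have hlim := (tendsto_one_div_add_atTop_nhds_zero_nat.const_mul c).const_add b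
  rw [mul_zero, add_zero] at hlim
  exact ge_of_tendsto' hlim fun N => by simpa only [mul_one_div] using h N

theorem log_two_pi_div_two_le_stirlingRem {x : ℝ} (hx : 0 < x) :
    log (2 * π) / 2 ≤ stirlingRem x := by
  refine le_of_forall_le_add_div_add_one (c := 3 / 2) fun N => ?_
  set k := ⌊x⌋₊
  have hk : (k : ℝ) ≤ x := Nat.floor_le hx.le
  have hk' : x < k + 1 := Nat.lt_floor_add_one x
  have hn : k + (N + 1) ≠ 0 := by omega
  calc log (2 * π) / 2
      ≤ stirlingRem ↑(k + (N + 1)) := log_two_pi_div_two_le_stirlingRem_natCast hn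
    _ ≤ stirlingRem (↑(k + (N + 1)) + (x - k)) + 3 / (2 * ↑(k + (N + 1))) :=
        stirlingRem_nat_le_add hn (by linarith) (by linarith)
    _ = stirlingRem (x + ↑(N + 1)) + 3 / (2 * ↑(k + (N + 1))) := by
        congr 2; push_cast; ring
    _ ≤ stirlingRem x + 3 / 2 / (N + 1) := by
        rw [div_div]
        gcongr
        · exact stirlingRem_add_nat_le hx _
        · push_cast; linarith [(Nat.cast_nonneg k : (0 : ℝ) ≤ k)]

theorem stirlingRem_le_one {x : ℝ} (hx : 1 ≤ x) : stirlingRem x ≤ 1 := by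
  rw [← stirlingRem_one, ← sub_nonpos]
  refine le_of_forall_le_add_div_add_one (c := 1) fun N => ?_
  set k := ⌊x⌋₊
  have hk1 : 1 ≤ k := Nat.le_floor (by exact_mod_cast hx)
  have hk : (k : ℝ) ≤ x := Nat.floor_le (by linarith)
  have hk' : x < k + 1 := Nat.lt_floor_add_one x
  have hn : k + N ≠ 0 := by omega
  have hint : stirlingRem ↑(k + N) ≤ stirlingRem (1 + N) := by
    have := stirlingRem_add_nat_le (x := 1 + N) (by positivity) (k - 1)
    convert this using 2
    push_cast [Nat.cast_sub hk1]
    ring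
  calc stirlingRem x - stirlingRem 1
      ≤ stirlingRem (x + N) - stirlingRem (1 + N) :=
        stirlingRem_sub_le_stirlingRem_add_nat_sub one_pos hx N
    _ = stirlingRem (↑(k + N) + (x - k)) - stirlingRem (1 + N) := by push_cast; ring_nf
    _ ≤ stirlingRem ↑(k + N) + 1 / ↑(k + N) - stirlingRem (1 + N) := by
        gcongr
        exact stirlingRem_nat_add_le hn (by linarith) (by linarith)
    _ ≤ 0 + 1 / (N + 1) := by
        have : 1 / (↑(k + N) : ℝ) ≤ 1 / (N + 1) := by
          gcongr
          push_cast
          linarith [(Nat.one_le_cast.mpr hk1 : (1 : ℝ) ≤ k)]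
        linarith

lemma log_Gamma_add_one_eq (x : ℝ) : log (Gamma (x + 1)) = stirlingRem x + logStirling x :=
  (sub_add_cancel _ _).symm

lemma mul_logStirling_div {k A : ℝ} (hk : 0 < k) (hA : 0 < A) :
    k * logStirling (A / k) = (A + k / 2) * (log A - log k) - A := by
  rw [logStirling, log_div hA.ne' hk.ne']
  field_simp

lemma log_Phi (k : ℕ) {M m : ℝ} (hlo : 0 < M - m) (hhi : 0 < M + m) :
    log (Phi k M m) = k * (log (Gamma ((M - m) / k + 1)) - log (Gamma ((M + m) / k + 1))) := by
  rw [Phi, log_pow, log_div (Gamma_pos_of_pos (by positivity)).ne'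
    (Gamma_pos_of_pos (by positivity)).ne']

lemma Phi_pos (k : ℕ) {M m : ℝ} (hlo : 0 < M - m) (hhi : 0 < M + m) : 0 < Phi k M m := by
  rw [Phi]
  have := Gamma_pos_of_pos (by positivity : 0 < (M - m) / k + 1)
  have := Gamma_pos_of_pos (by positivity : 0 < (M + m) / k + 1)
  positivity

lemma log_Phi_ge {k : ℕ} (hk : k ≠ 0) {M m : ℝ} (hlo : 0 < M - m)
    (hhi : (k : ℝ) ≤ M + m) :
    k * (log (2 * π) / 2 - 1) + (k * logStirling ((M - m) / k) - k * logStirling ((M + m) / k))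
      ≤ log (Phi k M m) := by
  have hk0 : (0 : ℝ) < k := by positivity
  have hlow := log_two_pi_div_two_le_stirlingRem (x := (M - m) / k) (by positivity)
  have hupp := stirlingRem_le_one (x := (M + m) / k) ((one_le_div hk0).mpr hhi)
  rw [log_Phi k hlo (by linarith), log_Gamma_add_one_eq, log_Gamma_add_one_eq]
  nlinarith

lemma log_Phi_le {k : ℕ} (hk : k ≠ 0) {M m : ℝ} (hlo : (k : ℝ) ≤ M - m)
    (hhi : 0 < M + m) :
    log (Phi k M m) ≤ k * (1 - log (2 * π) / 2) +
      (k * logStirling ((M - m) / k) - k * logStirling ((M + m) / k)) := by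
  have hk0 : (0 : ℝ) < k := by positivity
  have hupp := stirlingRem_le_one (x := (M - m) / k) ((one_le_div hk0).mpr hlo)
  have hlow := log_two_pi_div_two_le_stirlingRem (x := (M + m) / k) (div_pos hhi hk0)
  rw [log_Phi k (by linarith) hhi, log_Gamma_add_one_eq, log_Gamma_add_one_eq]
  nlinarith

theorem stmt_3_general (d n : ℕ) (hn1 : 1 ≤ n) (hn2 : n ≤ d - 1)
    (δ M : ℝ) (hδ0 : 0 < δ) (hδ1 : δ < 1) (hM : 0 < M) (hdM : (d : ℝ) ≤ (1 - δ) * M) :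
    (Real.sqrt (2 * Real.pi) / Real.exp 1) ^ (d + n) * ((d : ℝ) / n) ^ (2 * δ * M) *
        ((1 - δ) / (1 + δ)) ^ (((d : ℝ) - n) / 2)
      ≤ Phi d M (δ * M) / Phi n M (δ * M) := by
  have hn0 : (0 : ℝ) < n := by exact_mod_cast hn1
  have hnd : (n : ℝ) ≤ d := by exact_mod_cast (by omega : n ≤ d)
  have hd0 : (0 : ℝ) < d := hn0.trans_le hnd
  have hδ : 0 < 1 - δ := sub_pos.2 hδ1
  have hlo : (d : ℝ) ≤ M - δ * M := by linarith
  have hhi : M - δ * M ≤ M + δ * M := by nlinarith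
  have hPhi_d := Phi_pos d (M := M) (m := δ * M) (by linarith) (by linarith)
  have hPhi_n := Phi_pos n (M := M) (m := δ * M) (by linarith) (by linarith)
  have hlog_d := log_Phi_ge (M := M) (m := δ * M) (by omega : d ≠ 0) (by linarith) (by linarith)
  have hlog_n := log_Phi_le (M := M) (m := δ * M) (by omega : n ≠ 0) (by linarith) (by linarith)
  have hlogA : log (M - δ * M) = log M + log (1 - δ) := by
    rw [← log_mul hM.ne' hδ.ne']; ring_nf
  have hlogB : log (M + δ * M) = log M + log (1 + δ) := by
    rw [← log_mul hM.ne' (by linarith)]; ring_nf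
  rw [mul_logStirling_div hd0 (by linarith), mul_logStirling_div hd0 (by linarith), hlogA, hlogB]
    at hlog_d
  rw [mul_logStirling_div hn0 (by linarith), mul_logStirling_div hn0 (by linarith), hlogA, hlogB]
    at hlog_n
  rw [← log_le_log_iff (by positivity) (div_pos hPhi_d hPhi_n), log_div hPhi_d.ne' hPhi_n.ne',
    log_mul (by positivity) (by positivity), log_mul (by positivity) (by positivity), log_pow,
    log_rpow (by positivity), log_rpow (by positivity), log_div (by positivity) (by positivity),
    log_div hd0.ne' hn0.ne', log_div hδ.ne' (by positivity), log_sqrt (by positivity), log_exp]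
  push_cast
  linarith

theorem stmt_3 (d n : ℕ) (hd : 2 ≤ d) (hn1 : 1 ≤ n) (hn2 : n ≤ d - 1)
    (δ M : ℝ) (hδ0 : 0 < δ) (hδ1 : δ < 1) (hM : 0 < M) (hdM : (d : ℝ) ≤ (1 - δ) * M) :
    (Real.sqrt (2 * Real.pi) / Real.exp 1) ^ (d + n) * ((d : ℝ) / n) ^ (2 * δ * M) *
        ((1 - δ) / (1 + δ)) ^ (((d : ℝ) - n) / 2)
      ≤ Phi d M (δ * M) / Phi n M (δ * M) :=
  stmt_3_general d n hn1 hn2 δ M hδ0 hδ1 hM hdM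

end
end

section
/- Let d ≥ 2 and 1 ≤ n ≤ d − 1 be integers and let M > 0 be a real number with 2M ≥ d. Then Φ_d(M,M)/Φ_n(M,M) = (Γ(2M/n + 1))^n / (Γ(2M/d + 1))^d ≥ (√(2π))^n · e^{−d} · (d/(2M))^{(d−n)/2} · (d/n)^{2M + n/2}. -/
open MeasureTheory

noncomputable section

/-! Let `S x = log Γ(x+1) - (x + 1/2) log x + x` (`stirlingGap`). Its unit step
`S x - S (x+1) = (x + 1/2) log (1 + 1/x) - 1 = ∑_{k ≥ 1} (2x+1)^(-2k) / (2k+1)`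
is nonnegative and decreasing in `x`. So `S` decreases along unit steps, and log-convexity of `Γ`
controls `S` between consecutive integers, where Stirling's bound for `n!` gives
`S n ≥ log √(2π)`; hence `S ≥ log √(2π)` on `(0, ∞)`. Comparing the unit steps from `x ≥ 1` with
those from `1` gives `S x ≤ S 1 = 1`. Thus `√(2π) a^(a+1/2) e^(-a) ≤ Γ(a+1)` for `a > 0` and
`Γ(b+1) ≤ b^(b+1/2) e^(1-b)` for `b ≥ 1`; raising these to the powers `n` and `d` with
`a = 2M/n`, `b = 2M/d` gives the bound. -/

section StirlingGap

open Real Filter Topology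

variable {x y t : ℝ}

theorem hasSum_mul_log_one_add_inv (hx : 0 < x) :
    HasSum (fun k : ℕ => 1 / (2 * k + 1) * (1 / (2 * x + 1)) ^ (2 * k))
      ((x + 1 / 2) * log (1 + x⁻¹)) := by
  refine ((hasSum_log_one_add_inv hx).mul_left (x + 1 / 2)).congr_fun fun k => ?_
  have : 2 * x + 1 ≠ 0 := by positivity
  rw [pow_succ]
  generalize (1 / (2 * x + 1)) ^ (2 * k) = q
  field_simp

theorem one_le_mul_log_one_add_inv (hx : 0 < x) : 1 ≤ (x + 1 / 2) * log (1 + x⁻¹) := by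
  simpa using le_hasSum (hasSum_mul_log_one_add_inv hx) 0 fun k _ => by positivity

theorem antitoneOn_mul_log_one_add_inv :
    AntitoneOn (fun x : ℝ => (x + 1 / 2) * log (1 + x⁻¹)) (Set.Ioi 0) := by
  intro x (hx : 0 < x) y (hy : 0 < y) hxy
  refine hasSum_le (fun k => ?_) (hasSum_mul_log_one_add_inv hy) (hasSum_mul_log_one_add_inv hx)
  gcongr

def stirlingGap (x : ℝ) : ℝ := log (Gamma (x + 1)) - (x + 1 / 2) * log x + x

theorem stirlingGap_one : stirlingGap 1 = 1 := by
  norm_num [stirlingGap]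

theorem Gamma_add_one_eq_exp_stirlingGap (hx : 0 < x) :
    Gamma (x + 1) = exp (stirlingGap x) * x ^ (x + 1 / 2) * exp (-x) := by
  rw [stirlingGap, exp_add, exp_sub, exp_log (Gamma_pos_of_pos (by linarith)),
    rpow_def_of_pos hx, mul_comm (log x), exp_neg]
  field_simp

theorem stirlingGap_sub_stirlingGap_add_one (hx : 0 < x) :
    stirlingGap x - stirlingGap (x + 1) = (x + 1 / 2) * log (1 + x⁻¹) - 1 := by
  have hlog : log (1 + x⁻¹) = log (x + 1) - log x := by
    rw [← log_div (by positivity) hx.ne']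
    congr 1
    field_simp
  rw [stirlingGap, stirlingGap, Gamma_add_one (by positivity : x + 1 ≠ 0),
    log_mul (by positivity) (Gamma_pos_of_pos (by positivity)).ne', hlog]
  ring

theorem stirlingGap_add_nat_le (hx : 0 < x) (N : ℕ) : stirlingGap (x + N) ≤ stirlingGap x := by
  induction N with
  | zero => simp
  | succ N ih =>
    have hxN : 0 < x + N := by positivity
    have hstep := stirlingGap_sub_stirlingGap_add_one hxN
    have hpos := one_le_mul_log_one_add_inv hxN
    push_cast
    rw [← add_assoc]
    linarith

theorem stirlingGap_sub_stirlingGap_add_nat_le (hx : 0 < x) (hxy : x ≤ y) (N : ℕ) :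
    stirlingGap y - stirlingGap (y + N) ≤ stirlingGap x - stirlingGap (x + N) := by
  induction N with
  | zero => simp
  | succ N ih =>
    have hxN : 0 < x + N := by positivity
    have hyN : 0 < y + N := by linarith
    have hstep_x := stirlingGap_sub_stirlingGap_add_one hxN
    have hstep_y := stirlingGap_sub_stirlingGap_add_one hyN
    have hanti := antitoneOn_mul_log_one_add_inv hxN hyN (by linarith)
    push_cast
    rw [← add_assoc, ← add_assoc]
    linarith

theorem log_Gamma_add_one_add_mul_log_le (hx : 0 < x) (ht₀ : 0 ≤ t) (ht₁ : t ≤ 1) :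
    log (Gamma (x + 1)) + t * log (x + t) ≤ log (Gamma (x + t + 1)) := by
  have hxt : 0 < x + t := by linarith
  have hconv := convexOn_log_Gamma.2 (Set.mem_Ioi.2 hxt)
    (Set.mem_Ioi.2 (by linarith : 0 < x + t + 1)) ht₀ (by linarith : 0 ≤ 1 - t) (by ring)
  have hmid : t • (x + t) + (1 - t) • (x + t + 1) = x + 1 := by
    simp only [smul_eq_mul]
    ring
  rw [hmid] at hconv
  simp only [Function.comp_apply, smul_eq_mul] at hconv
  rw [Gamma_add_one hxt.ne', log_mul hxt.ne' (Gamma_pos_of_pos hxt).ne'] at hconv ⊢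
  linear_combination hconv

theorem stirlingGap_le_stirlingGap_add (hx : 0 < x) (ht₀ : 0 ≤ t) (ht₁ : t ≤ 1) :
    stirlingGap x ≤ stirlingGap (x + t) + t / (2 * x) := by
  have hΓ := log_Gamma_add_one_add_mul_log_le hx ht₀ ht₁
  have hlog : log (x + t) - log x ≤ t / x := by
    rw [← log_div (by linarith) hx.ne']
    calc _ ≤ (x + t) / x - 1 := log_le_sub_one_of_pos (by positivity)
      _ = t / x := by field_simp; ring
  have hmul : (x + 1 / 2) * (log (x + t) - log x) ≤ t + t / (2 * x) := by
    calc _ ≤ (x + 1 / 2) * (t / x) := mul_le_mul_of_nonneg_left hlog (by positivity)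
      _ = t + t / (2 * x) := by field_simp
  unfold stirlingGap
  linear_combination hΓ + hmul

theorem half_log_two_pi_le_stirlingGap_natCast {n : ℕ} (hn : n ≠ 0) :
    log (2 * π) / 2 ≤ stirlingGap n := by
  rw [stirlingGap, Gamma_nat_eq_factorial]
  linear_combination Stirling.le_log_factorial_stirling hn

theorem half_log_two_pi_le_stirlingGap (hx : 0 < x) : log (2 * π) / 2 ≤ stirlingGap x := by
  have hm : (⌊x⌋₊ : ℝ) ≤ x := Nat.floor_le hx.le
  have hm' : x < ⌊x⌋₊ + 1 := Nat.lt_floor_add_one x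
  have hlim : Tendsto (fun N : ℕ => stirlingGap x + 1 / ((N : ℝ) + 1)) atTop
      (𝓝 (stirlingGap x)) := by
    simpa using tendsto_const_nhds.add (tendsto_one_div_add_atTop_nhds_zero_nat (𝕜 := ℝ))
  refine ge_of_tendsto' hlim fun N => ?_
  set k : ℕ := ⌊x⌋₊ + (N + 1)
  have hk : (k : ℝ) = ⌊x⌋₊ + (N + 1) := by push_cast [k]; ring
  have hkN : (N : ℝ) + 1 ≤ k := by rw [hk]; linarith [(Nat.cast_nonneg ⌊x⌋₊ : (0 : ℝ) ≤ _)]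
  calc log (2 * π) / 2 ≤ stirlingGap k := half_log_two_pi_le_stirlingGap_natCast (by omega)
    _ ≤ stirlingGap (k + (x - ⌊x⌋₊)) + (x - ⌊x⌋₊) / (2 * k) :=
      stirlingGap_le_stirlingGap_add (by positivity) (by linarith) (by linarith)
    _ ≤ stirlingGap x + 1 / (N + 1) := by
      gcongr ?_ + ?_
      · rw [show (k : ℝ) + (x - ⌊x⌋₊) = x + ((N + 1 : ℕ) : ℝ) by rw [hk]; push_cast; ring]
        exact stirlingGap_add_nat_le hx (N + 1)
      · rw [div_le_div_iff₀ (by positivity) (by positivity)]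
        nlinarith

theorem stirlingGap_le_one (hx : 1 ≤ x) : stirlingGap x ≤ 1 := by
  have hm : (⌊x⌋₊ : ℝ) ≤ x := Nat.floor_le (by linarith)
  have hm' : x < ⌊x⌋₊ + 1 := Nat.lt_floor_add_one x
  have hm1 : (1 : ℝ) ≤ ⌊x⌋₊ := by exact_mod_cast Nat.one_le_floor_iff x |>.2 hx
  have hlim : Tendsto (fun N : ℕ => 1 + 1 / ((N : ℝ) + 1)) atTop (𝓝 1) := by
    simpa using tendsto_const_nhds.add (tendsto_one_div_add_atTop_nhds_zero_nat (𝕜 := ℝ))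
  refine ge_of_tendsto' hlim fun N => ?_
  have hxN : 0 < x + N := by positivity
  -- the steps from `x` are dominated by those from `1`, and `x + N` is one fractional step
  -- below the integer `⌊x⌋₊ + N + 1 ≥ N + 1`
  have hsteps := stirlingGap_sub_stirlingGap_add_nat_le one_pos hx N
  have hfrac := stirlingGap_le_stirlingGap_add hxN (t := ⌊x⌋₊ + 1 - x) (by linarith) (by linarith)
  have hint := stirlingGap_add_nat_le (x := 1 + N) (by positivity) ⌊x⌋₊
  have herr : (⌊x⌋₊ + 1 - x) / (2 * (x + N)) ≤ 1 / (N + 1) := by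
    rw [div_le_div_iff₀ (by positivity) (by positivity)]
    nlinarith
  rw [show x + N + (⌊x⌋₊ + 1 - x) = 1 + N + ⌊x⌋₊ by ring] at hfrac
  rw [stirlingGap_one] at hsteps
  linarith

theorem sqrt_two_pi_mul_rpow_mul_exp_neg_le_Gamma (hx : 0 < x) :
    √(2 * π) * x ^ (x + 1 / 2) * exp (-x) ≤ Gamma (x + 1) := by
  rw [Gamma_add_one_eq_exp_stirlingGap hx]
  gcongr
  calc √(2 * π) = exp (log (2 * π) / 2) := by rw [exp_half, exp_log (by positivity)]
    _ ≤ exp (stirlingGap x) := exp_le_exp.2 (half_log_two_pi_le_stirlingGap hx)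

theorem Gamma_add_one_le_rpow_mul_exp (hx : 1 ≤ x) :
    Gamma (x + 1) ≤ x ^ (x + 1 / 2) * exp (1 - x) := by
  rw [Gamma_add_one_eq_exp_stirlingGap (by linarith), sub_eq_add_neg, exp_add]
  calc _ ≤ exp 1 * x ^ (x + 1 / 2) * exp (-x) := by
        gcongr
        exact stirlingGap_le_one hx
    _ = _ := by ring

end StirlingGap

theorem Phi_self (d : ℕ) (m : ℝ) : Phi d m m = (Real.Gamma (2 * m / d + 1))⁻¹ ^ d := by
  rw [Phi, sub_self, zero_div, zero_add, Real.Gamma_one, one_div, ← two_mul]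

section GammaPowers

open Real

variable {k : ℕ} {T : ℝ}

theorem sqrt_two_pi_pow_mul_rpow_mul_exp_neg_le_Gamma_pow (hk : k ≠ 0) (hT : 0 < T) :
    √(2 * π) ^ k * (T / k) ^ (T + k / 2) * exp (-T) ≤ Gamma (T / k + 1) ^ k := by
  have hTk : 0 < T / k := by positivity
  calc _ = (√(2 * π) * (T / k) ^ (T / k + 1 / 2) * exp (-(T / k))) ^ k := by
        rw [mul_pow, mul_pow, ← rpow_natCast ((T / k) ^ _), ← rpow_mul hTk.le, ← exp_nat_mul]
        congr 3 <;> field_simp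
    _ ≤ _ := pow_le_pow_left₀ (by positivity) (sqrt_two_pi_mul_rpow_mul_exp_neg_le_Gamma hTk) k

theorem Gamma_pow_le_rpow_mul_exp (hk : k ≠ 0) (hkT : k ≤ T) :
    Gamma (T / k + 1) ^ k ≤ (T / k) ^ (T + k / 2) * exp (k - T) := by
  have hk' : (0 : ℝ) < k := by positivity
  have hTk : 1 ≤ T / k := (one_le_div hk').2 hkT
  calc _ ≤ ((T / k) ^ (T / k + 1 / 2) * exp (1 - T / k)) ^ k :=
        pow_le_pow_left₀ (Gamma_pos_of_pos (by positivity)).le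
          (Gamma_add_one_le_rpow_mul_exp hTk) k
    _ = _ := by
        rw [mul_pow, ← rpow_natCast ((T / k) ^ _), ← rpow_mul (by positivity), ← exp_nat_mul]
        congr 2 <;> field_simp

theorem sqrt_two_pi_pow_mul_le_Gamma_pow_div_Gamma_pow {n d : ℕ} (hn : n ≠ 0) (hd : d ≠ 0)
    {M : ℝ} (hdM : (d : ℝ) ≤ 2 * M) :
    √(2 * π) ^ n * exp (-(d : ℝ)) * ((d : ℝ) / (2 * M)) ^ (((d : ℝ) - n) / 2) *
        ((d : ℝ) / n) ^ (2 * M + n / 2)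
      ≤ Gamma (2 * M / n + 1) ^ n / Gamma (2 * M / d + 1) ^ d := by
  have hM : 0 < M := by
    have : (0 : ℝ) < d := by positivity
    linarith
  have hu : 0 < (d : ℝ) / (2 * M) := by positivity
  calc _ = √(2 * π) ^ n * (2 * M / n) ^ (2 * M + n / 2) * exp (-(2 * M)) /
        ((2 * M / d) ^ (2 * M + d / 2) * exp (d - 2 * M)) := by
        have hsplit : ((d : ℝ) / (2 * M)) ^ (((d : ℝ) - n) / 2) *
            ((d : ℝ) / (2 * M)) ^ (2 * M + n / 2) = ((d : ℝ) / (2 * M)) ^ (2 * M + d / 2) := by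
          rw [← rpow_add hu]; ring_nf
        have hexp : exp (-(d : ℝ)) * exp (d - 2 * M) = exp (-(2 * M)) := by
          rw [← exp_add]; ring_nf
        rw [show (d : ℝ) / n = 2 * M / n * (d / (2 * M)) by field_simp,
          mul_rpow (by positivity) hu.le, show 2 * M / d = ((d : ℝ) / (2 * M))⁻¹ by rw [inv_div],
          inv_rpow hu.le, eq_div_iff (by positivity), ← hsplit, ← hexp]
        field_simp
    _ ≤ _ := div_le_div₀ (by positivity)
        (sqrt_two_pi_pow_mul_rpow_mul_exp_neg_le_Gamma_pow hn (by positivity)) (by positivity)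
        (Gamma_pow_le_rpow_mul_exp hd hdM)

end GammaPowers

theorem stmt_4_general (d n : ℕ) (hd : 2 ≤ d) (hn1 : 1 ≤ n)
    (M : ℝ) (hdM : (d : ℝ) ≤ 2 * M) :
    Phi d M M / Phi n M M
        = (Real.Gamma (2 * M / n + 1)) ^ n / (Real.Gamma (2 * M / d + 1)) ^ d ∧
    (Real.sqrt (2 * Real.pi)) ^ n * Real.exp (-(d : ℝ)) *
          ((d : ℝ) / (2 * M)) ^ (((d : ℝ) - n) / 2) * ((d : ℝ) / n) ^ (2 * M + n / 2)
      ≤ (Real.Gamma (2 * M / n + 1)) ^ n / (Real.Gamma (2 * M / d + 1)) ^ d := by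
  refine ⟨?_, sqrt_two_pi_pow_mul_le_Gamma_pow_div_Gamma_pow (by omega) (by omega) hdM⟩
  rw [Phi_self, Phi_self, inv_pow, inv_pow, inv_div_inv]

theorem stmt_4 (d n : ℕ) (hd : 2 ≤ d) (hn1 : 1 ≤ n) (hn2 : n ≤ d - 1)
    (M : ℝ) (hM : 0 < M) (hdM : (d : ℝ) ≤ 2 * M) :
    Phi d M M / Phi n M M
        = (Real.Gamma (2 * M / n + 1)) ^ n / (Real.Gamma (2 * M / d + 1)) ^ d ∧
    (Real.sqrt (2 * Real.pi)) ^ n * Real.exp (-(d : ℝ)) *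
          ((d : ℝ) / (2 * M)) ^ (((d : ℝ) - n) / 2) * ((d : ℝ) / n) ^ (2 * M + n / 2)
      ≤ (Real.Gamma (2 * M / n + 1)) ^ n / (Real.Gamma (2 * M / d + 1)) ^ d :=
  stmt_4_general d n hd hn1 M hdM

end
end

section
/- Let R > 0 and define F_1(R, ε) = ((1−ε)^{1−ε}/(1+ε)^{1+ε}) · (εR)^{2ε} for ε ∈ (0,1). Then the minimum of F_1(R, ·) over (0,1) is attained at ε_min = 1/√(1+R²), the minimum value equals (R/(√(1+R²) + 1))², and this value is strictly less than 1; that is, F_1(R, ε) ≥ (R/(√(1+R²)+1))² for all ε ∈ (0,1), with equality at ε = ε_min, and (R/(√(1+R²)+1))² < 1. -/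
open MeasureTheory

noncomputable section

/-- F₁(R,ε) = ((1−ε)^{1−ε}/(1+ε)^{1+ε})·(εR)^{2ε}. -/
def F1 (R ε : ℝ) : ℝ := ((1 - ε) ^ (1 - ε) / (1 + ε) ^ (1 + ε)) * (ε * R) ^ (2 * ε)


/-!
Write `F1 R = exp ∘ logF1 R` on `(0, 1)`. The derivative of `logF1 R` at `ε` is
`log ((ε R)²) - log (1 - ε²)`, whose sign is that of `ε²(1 + R²) - 1`, so `logF1 R` decreases
up to `ε = 1/s` with `s = √(1 + R²)` and increases afterwards. Since `R² = (s - 1)(s + 1)`, the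
value at `1/s` is `log ((s - 1)/(s + 1)) = log ((R/(s + 1))²)`, and `(s - 1)/(s + 1) < 1`.
-/

open Real Set

theorem isMinOn_Ioo_of_hasDerivAt_sign {f f' : ℝ → ℝ} {a b c : ℝ} (hc : c ∈ Ioo a b)
    (hf : ∀ x ∈ Ioo a b, HasDerivAt f (f' x) x)
    (h_left : ∀ x ∈ Ioo a c, f' x ≤ 0) (h_right : ∀ x ∈ Ioo c b, 0 ≤ f' x) :
    IsMinOn f (Ioo a b) c := by
  have hcont : ContinuousOn f (Ioo a b) := fun x hx ↦ (hf x hx).continuousAt.continuousWithinAt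
  have h_anti : AntitoneOn f (Ioc a c) := by
    refine antitoneOn_of_hasDerivWithinAt_nonpos (convex_Ioc a c)
      (hcont.mono (Ioc_subset_Ioo_right hc.2)) (fun x hx ↦ ?_) (by rwa [interior_Ioc])
    rw [interior_Ioc] at hx ⊢
    exact (hf x ⟨hx.1, hx.2.trans hc.2⟩).hasDerivWithinAt
  have h_mono : MonotoneOn f (Ico c b) := by
    refine monotoneOn_of_hasDerivWithinAt_nonneg (convex_Ico c b)
      (hcont.mono (Ico_subset_Ioo_left hc.1)) (fun x hx ↦ ?_) (by rwa [interior_Ico])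
    rw [interior_Ico] at hx ⊢
    exact (hf x ⟨hc.1.trans hx.1, hx.2⟩).hasDerivWithinAt
  intro x hx
  rcases le_total x c with hxc | hcx
  · exact h_anti ⟨hx.1, hxc⟩ ⟨hc.1, le_rfl⟩ hxc
  · exact h_mono ⟨le_rfl, hc.2⟩ ⟨hcx, hx.2⟩ hcx

theorem one_lt_sqrt_one_add_sq {R : ℝ} (hR : R ≠ 0) : 1 < √(1 + R ^ 2) := by
  rw [lt_sqrt zero_le_one]
  linarith [pow_pos (abs_pos.2 hR) 2, sq_abs R]

theorem one_div_sqrt_one_add_sq_mem_Ioo {R : ℝ} (hR : R ≠ 0) :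
    1 / √(1 + R ^ 2) ∈ Ioo (0 : ℝ) 1 :=
  ⟨by positivity, (div_lt_one (by positivity)).2 (one_lt_sqrt_one_add_sq hR)⟩

theorem mul_sq_lt_one_sub_sq_iff {R ε : ℝ} (hε : 0 < ε) :
    (ε * R) ^ 2 < 1 - ε ^ 2 ↔ ε < 1 / √(1 + R ^ 2) := by
  have hs : 0 < √(1 + R ^ 2) := by positivity
  rw [lt_div_iff₀ hs, ← pow_lt_pow_iff_left₀ (by positivity) zero_le_one two_ne_zero, mul_pow,
    mul_pow, sq_sqrt (by positivity), one_pow]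
  constructor <;> intro h <;> linarith

theorem sq_div_sqrt_one_add_sq_add_one (R : ℝ) :
    (R / (√(1 + R ^ 2) + 1)) ^ 2 = (√(1 + R ^ 2) - 1) / (√(1 + R ^ 2) + 1) := by
  have hs : √(1 + R ^ 2) ^ 2 = 1 + R ^ 2 := sq_sqrt (by positivity)
  have hs1 : 0 < √(1 + R ^ 2) + 1 := by positivity
  rw [div_pow, div_eq_div_iff (by positivity) hs1.ne']
  linear_combination -(√(1 + R ^ 2) + 1) * hs

theorem sq_div_sqrt_one_add_sq_add_one_lt_one (R : ℝ) :
    (R / (√(1 + R ^ 2) + 1)) ^ 2 < 1 := by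
  rw [sq_div_sqrt_one_add_sq_add_one, div_lt_one (by positivity)]
  linarith

def logF1 (R ε : ℝ) : ℝ :=
  (1 - ε) * log (1 - ε) - (1 + ε) * log (1 + ε) + 2 * ε * log (ε * R)

theorem F1_eq_exp_logF1 {R ε : ℝ} (hR : 0 < R) (hε : ε ∈ Ioo (0 : ℝ) 1) :
    F1 R ε = exp (logF1 R ε) := by
  rw [F1, logF1, rpow_def_of_pos (by linarith [hε.2]), rpow_def_of_pos (by linarith [hε.1]),
    rpow_def_of_pos (mul_pos hε.1 hR), ← exp_sub, ← exp_add]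
  ring_nf

theorem hasDerivAt_logF1 {R ε : ℝ} (hR : R ≠ 0) (hε : ε ∈ Ioo (0 : ℝ) 1) :
    HasDerivAt (logF1 R) (log ((ε * R) ^ 2) - log (1 - ε ^ 2)) ε := by
  obtain ⟨h0, h1⟩ := hε
  have hsub : HasDerivAt (fun t ↦ 1 - t) (-1) ε := by simpa using (hasDerivAt_id ε).const_sub 1
  have hadd : HasDerivAt (fun t ↦ 1 + t) 1 ε := by simpa using (hasDerivAt_id ε).const_add 1
  have hmul : HasDerivAt (fun t ↦ t * R) R ε := by simpa using (hasDerivAt_id ε).mul_const R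
  refine (((hsub.mul (hsub.log (by linarith))).sub (hadd.mul (hadd.log (by linarith)))).add
    (((hasDerivAt_id' ε).const_mul 2).mul (hmul.log (by positivity)))).congr_deriv ?_
  have hl : log (1 - ε ^ 2) = log (1 - ε) + log (1 + ε) := by
    rw [← log_mul (by linarith) (by linarith)]
    ring_nf
  rw [log_pow, hl]
  field_simp
  ring

theorem isMinOn_logF1 {R : ℝ} (hR : R ≠ 0) :
    IsMinOn (logF1 R) (Ioo 0 1) (1 / √(1 + R ^ 2)) := by
  refine isMinOn_Ioo_of_hasDerivAt_sign (one_div_sqrt_one_add_sq_mem_Ioo hR)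
    (fun x hx ↦ hasDerivAt_logF1 hR hx) (fun x hx ↦ ?_) (fun x hx ↦ ?_)
  · have hx0 : x ≠ 0 := hx.1.ne'
    exact sub_nonpos.2 <| log_le_log (by positivity) ((mul_sq_lt_one_sub_sq_iff hx.1).2 hx.2).le
  · have hx0 : 0 < x := (one_div_sqrt_one_add_sq_mem_Ioo hR).1.trans hx.1
    refine sub_nonneg.2 <| log_le_log (by nlinarith [hx.2]) (le_of_not_gt fun h ↦ ?_)
    exact hx.1.not_gt ((mul_sq_lt_one_sub_sq_iff hx0).1 h)

theorem logF1_one_div_sqrt_one_add_sq {R : ℝ} (hR : R ≠ 0) :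
    logF1 R (1 / √(1 + R ^ 2)) = log ((√(1 + R ^ 2) - 1) / (√(1 + R ^ 2) + 1)) := by
  have hs1 := one_lt_sqrt_one_add_sq hR
  set s := √(1 + R ^ 2)
  have hs0 : s ≠ 0 := by positivity
  have hR2 : R ^ 2 = (s - 1) * (s + 1) := by
    linear_combination -(sq_sqrt (by positivity) : s ^ 2 = 1 + R ^ 2)
  have hlogR : 2 * log R = log (s - 1) + log (s + 1) := by
    rw [← log_mul (by linarith) (by linarith), ← hR2, log_pow, Nat.cast_ofNat]
  rw [logF1, show 1 - 1 / s = (s - 1) / s by field_simp,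
    show 1 + 1 / s = (s + 1) / s by field_simp, one_div_mul_eq_div, log_div (by linarith) hs0,
    log_div (by linarith) hs0, log_div hR hs0, log_div (by linarith) (by linarith)]
  field_simp
  linear_combination hlogR

theorem F1_one_div_sqrt_one_add_sq {R : ℝ} (hR : 0 < R) :
    F1 R (1 / √(1 + R ^ 2)) = (R / (√(1 + R ^ 2) + 1)) ^ 2 := by
  have hs1 := one_lt_sqrt_one_add_sq hR.ne'
  rw [F1_eq_exp_logF1 hR (one_div_sqrt_one_add_sq_mem_Ioo hR.ne'),
    logF1_one_div_sqrt_one_add_sq hR.ne', exp_log (by apply div_pos <;> linarith),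
    sq_div_sqrt_one_add_sq_add_one]

theorem stmt_13 (R : ℝ) (hR : 0 < R) :
    1 / Real.sqrt (1 + R ^ 2) ∈ Set.Ioo (0 : ℝ) 1 ∧
    (∀ ε ∈ Set.Ioo (0 : ℝ) 1, (R / (Real.sqrt (1 + R ^ 2) + 1)) ^ 2 ≤ F1 R ε) ∧
    F1 R (1 / Real.sqrt (1 + R ^ 2)) = (R / (Real.sqrt (1 + R ^ 2) + 1)) ^ 2 ∧
    (R / (Real.sqrt (1 + R ^ 2) + 1)) ^ 2 < 1 := by
  have hmin := one_div_sqrt_one_add_sq_mem_Ioo hR.ne'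
  refine ⟨hmin, fun ε hε ↦ ?_, F1_one_div_sqrt_one_add_sq hR,
    sq_div_sqrt_one_add_sq_add_one_lt_one R⟩
  rw [← F1_one_div_sqrt_one_add_sq hR, F1_eq_exp_logF1 hR hε, F1_eq_exp_logF1 hR hmin]
  exact exp_le_exp.2 (isMinOn_logF1 hR.ne' hε)

end
end

section
/- Let d ≥ 1, q ≥ 1, s ≥ 1 be integers with q − s ≥ d, let R > 0 be real, and set ε = s/q. Then R^{2s} · Γ(s+1)² · Φ_d(q, s) ≤ e² (e/√(2π))^d · q · ( ((1−ε)^{1−ε}/(1+ε)^{1+ε}) · (εRd)^{2ε} )^{q}. -/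
open MeasureTheory

noncomputable section

/-! Everything rests on two-sided Stirling bounds: with
`F x = log (Γ(x+1) / (x^(x+1/2) e^(-x)))`, one has `log √(2π) ≤ F x` for `x > 0` and
`F x ≤ 1` for `x ≥ 1`. The decrement `F x - F (x+1) = (x + 1/2) log (1 + 1/x) - 1` is a series
of nonnegative terms decreasing in `x`, so `F` decreases along `x + ℕ`, and for `x ≥ 1` so do
the gaps `F (1+n) - F (x+n)`; both are pinned down by `F (x+n) → log √(2π)`, which follows from
Stirling's formula for `n!` and the Euler–Gauss limit for `Γ`, and `F 1 = 1`. After taking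
logarithms, the theorem reduces to `log s ≤ log q` and `log (q-s) ≤ log (q+s)`. -/

open Real Filter Topology

def stirlingRemainder (x : ℝ) : ℝ := log (Gamma (x + 1)) + x - (x + 1 / 2) * log x

theorem hasSum_stirlingRemainder_sub_add_one {x : ℝ} (hx : 0 < x) :
    HasSum (fun k : ℕ => 1 / (2 * ((k : ℝ) + 1) + 1) * ((1 / (2 * x + 1)) ^ 2) ^ (k + 1))
      (stirlingRemainder x - stirlingRemainder (x + 1)) := by
  let f (k : ℕ) : ℝ := 1 / (2 * k + 1) * ((1 / (2 * x + 1)) ^ 2) ^ k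
  have hf : HasSum f ((x + 1 / 2) * log (1 + x⁻¹)) := by
    refine ((hasSum_log_one_add_inv hx).mul_left (x + 1 / 2)).congr_fun fun k => ?_
    simp only [f, pow_succ]
    field
  have hlog : (x + 1 / 2) * log (1 + x⁻¹) =
      stirlingRemainder x - stirlingRemainder (x + 1) + f 0 := by
    rw [stirlingRemainder, stirlingRemainder, Gamma_add_one (s := x + 1) (by positivity),
      log_mul (by positivity) (Gamma_pos_of_pos (by positivity)).ne',
      show 1 + x⁻¹ = (x + 1) / x by field, log_div (by positivity) hx.ne']
    simp only [f, pow_succ]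
    ring
  rw [hlog, ← hasSum_nat_add_iff' 1] at hf
  simpa [f] using hf

theorem stirlingRemainder_add_one_le {x : ℝ} (hx : 0 < x) :
    stirlingRemainder (x + 1) ≤ stirlingRemainder x :=
  sub_nonneg.mp <| (hasSum_stirlingRemainder_sub_add_one hx).nonneg fun _ => by positivity

theorem stirlingRemainder_sub_add_one_le {x y : ℝ} (hx : 0 < x) (hxy : x ≤ y) :
    stirlingRemainder y - stirlingRemainder (y + 1) ≤
      stirlingRemainder x - stirlingRemainder (x + 1) := by
  have hy : 0 < y := hx.trans_le hxy
  refine hasSum_le (fun k => ?_) (hasSum_stirlingRemainder_sub_add_one hy)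
    (hasSum_stirlingRemainder_sub_add_one hx)
  gcongr

open scoped Nat in
theorem stirlingRemainder_natCast {n : ℕ} (hn : n ≠ 0) :
    stirlingRemainder n = log (Stirling.stirlingSeq n) + log √2 := by
  have hn' : (0 : ℝ) < n := by positivity
  rw [stirlingRemainder, Stirling.log_stirlingSeq_formula, Gamma_nat_eq_factorial,
    log_div hn'.ne' (exp_pos 1).ne', log_exp, log_mul two_ne_zero hn'.ne', log_sqrt zero_le_two]
  ring

open scoped Nat in
theorem tendsto_log_Gamma_add_nat_sub {x : ℝ} (hx : 0 < x) :
    Tendsto (fun n : ℕ => log (Gamma (x + n + 1)) - log n ! - x * log n) atTop (𝓝 0) := by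
  have hfeq : ∀ {y : ℝ}, 0 < y → (log ∘ Gamma) (y + 1) = (log ∘ Gamma) y + log y :=
    fun hy => by
      rw [Function.comp_apply, Gamma_add_one hy.ne', log_mul hy.ne' (Gamma_pos_of_pos hy).ne',
        add_comm, Function.comp_apply]
  have h := (tendsto_const_nhds (x := log (Gamma x))).sub (BohrMollerup.tendsto_log_gamma hx)
  rw [sub_self] at h
  refine h.congr fun n => ?_
  have := BohrMollerup.f_add_nat_eq hfeq hx (n + 1)
  simp only [Function.comp_apply, Nat.cast_add_one] at this
  rw [BohrMollerup.logGammaSeq, add_assoc, this]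
  ring

theorem tendsto_stirlingRemainder_add_nat {x : ℝ} (hx : 0 < x) :
    Tendsto (fun n : ℕ => stirlingRemainder (x + n)) atTop (𝓝 (log √(2 * π))) := by
  have hstirling : Tendsto (fun n : ℕ => stirlingRemainder n) atTop (𝓝 (log √(2 * π))) := by
    have h := ((continuousAt_log (by positivity)).tendsto.comp
      Stirling.tendsto_stirlingSeq_sqrt_pi).add_const (log √2)
    rw [← log_mul (by positivity) (by positivity), ← sqrt_mul pi_pos.le, mul_comm] at h
    refine h.congr' ?_
    filter_upwards [eventually_ne_atTop 0] with n hn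
    exact (stirlingRemainder_natCast hn).symm
  have hlog : Tendsto (fun n : ℕ => (x + n + 1 / 2) * log (1 + x / n)) atTop (𝓝 x) := by
    have h1 := (tendsto_mul_log_one_add_div_atTop x).comp tendsto_natCast_atTop_atTop
    have h2 : Tendsto (fun n : ℕ => log (1 + x / n)) atTop (𝓝 0) := by
      have := (continuousAt_log (by norm_num)).tendsto.comp
        ((tendsto_const_div_atTop_nhds_zero_nat x).const_add 1)
      rwa [add_zero, log_one] at this
    have := h1.add (h2.const_mul (x + 1 / 2))
    rw [mul_zero, add_zero] at this
    exact this.congr fun n => by simp only [Function.comp_apply]; ring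
  have := ((tendsto_log_Gamma_add_nat_sub hx).add hstirling).add
    ((tendsto_const_nhds (x := x)).sub hlog)
  rw [zero_add, sub_self, add_zero] at this
  refine this.congr' ?_
  filter_upwards [eventually_ne_atTop 0] with n hn
  have hn' : (0 : ℝ) < n := by positivity
  rw [stirlingRemainder, stirlingRemainder, Gamma_nat_eq_factorial,
    show 1 + x / n = (x + n) / n by field, log_div (by positivity) hn'.ne']
  ring

theorem log_sqrt_two_pi_le_stirlingRemainder {x : ℝ} (hx : 0 < x) :
    log √(2 * π) ≤ stirlingRemainder x := by
  have hanti : Antitone fun n : ℕ => stirlingRemainder (x + n) :=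
    antitone_nat_of_succ_le fun n => by
      simpa [add_assoc] using stirlingRemainder_add_one_le (x := x + n) (by positivity)
  simpa using hanti.le_of_tendsto (tendsto_stirlingRemainder_add_nat hx) 0

theorem stirlingRemainder_le_one {x : ℝ} (hx : 1 ≤ x) : stirlingRemainder x ≤ 1 := by
  have hanti : Antitone fun n : ℕ => stirlingRemainder (1 + n) - stirlingRemainder (x + n) :=
    antitone_nat_of_succ_le fun n => by
      have := stirlingRemainder_sub_add_one_le (x := 1 + n) (y := x + n) (by positivity)
        (by linarith)
      rw [Nat.cast_add_one, ← add_assoc, ← add_assoc]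
      linarith
  have hlim := (tendsto_stirlingRemainder_add_nat one_pos).sub
    (tendsto_stirlingRemainder_add_nat (one_pos.trans_le hx))
  rw [sub_self] at hlim
  have h := hanti.le_of_tendsto hlim 0
  have h1 : stirlingRemainder 1 = 1 := by
    norm_num [stirlingRemainder, Gamma_two]
  simp only [Nat.cast_zero, add_zero, h1] at h
  linarith

theorem log_Gamma_add_one_le {x : ℝ} (hx : 1 ≤ x) :
    log (Gamma (x + 1)) ≤ 1 - x + (x + 1 / 2) * log x := by
  have := stirlingRemainder_le_one hx
  rw [stirlingRemainder] at this
  linarith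

theorem le_log_Gamma_add_one {x : ℝ} (hx : 0 < x) :
    log √(2 * π) - x + (x + 1 / 2) * log x ≤ log (Gamma (x + 1)) := by
  have := log_sqrt_two_pi_le_stirlingRemainder hx
  rw [stirlingRemainder] at this
  linarith

theorem Phi_pos_s14 {d : ℕ} {m n : ℝ} (hnm : |n| ≤ m) : 0 < Phi d m n := by
  have hm : 0 ≤ m - n := by linarith [le_abs_self n]
  have hp : 0 ≤ m + n := by linarith [neg_abs_le n]
  rw [Phi]
  exact pow_pos (div_pos (Gamma_pos_of_pos (by positivity)) (Gamma_pos_of_pos (by positivity))) _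

theorem log_Phi_le_s14 {d : ℕ} {m n : ℝ} (hd : d ≠ 0) (hn : 0 ≤ n) (hnm : n + d ≤ m) :
    log (Phi d m n) ≤ d * (1 - log √(2 * π)) + 2 * n + (m - n + d / 2) * log ((m - n) / d)
      - (m + n + d / 2) * log ((m + n) / d) := by
  have hd0 : (0 : ℝ) < d := by positivity
  have ha : 1 ≤ (m - n) / d := by rw [le_div_iff₀ hd0]; linarith
  have hb : 0 < (m + n) / d := div_pos (by linarith) hd0
  have hΓa := log_Gamma_add_one_le ha
  have hΓb := le_log_Gamma_add_one hb
  rw [Phi, log_pow,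
    log_div (Gamma_pos_of_pos (by linarith)).ne' (Gamma_pos_of_pos (by linarith)).ne']
  have hda : d * ((m - n) / d) = m - n := by field
  have hdb : d * ((m + n) / d) = m + n := by field
  linear_combination (d : ℝ) * hΓa + (d : ℝ) * hΓb + (log ((m - n) / d) - 1) * hda
    - (log ((m + n) / d) - 1) * hdb

theorem mul_log_entropy_factor {q s R d : ℝ} (hs : 0 < s) (hsq : s < q) (hR : 0 < R)
    (hd : 0 < d) :
    q * log ((1 - s / q) ^ (1 - s / q) / (1 + s / q) ^ (1 + s / q) *
        (s / q * R * d) ^ (2 * (s / q))) =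
      (q - s) * log ((q - s) / d) - (q + s) * log ((q + s) / d) + 2 * s * log (s * R) := by
  have hq : 0 < q := hs.trans hsq
  have hm : 0 < q - s := by linarith
  have hp : 0 < q + s := by linarith
  have hsub : 1 - s / q = (q - s) / q := by field
  have hadd : 1 + s / q = (q + s) / q := by field
  have hsR : s / q * R * d = s * R * d / q := by ring
  rw [hsub, hadd, hsR, log_mul (by positivity) (by positivity),
    log_div (by positivity) (by positivity), log_rpow (by positivity), log_rpow (by positivity),
    log_rpow (by positivity)]
  simp only [log_div hm.ne' hq.ne', log_div hp.ne' hq.ne', log_div hm.ne' hd.ne',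
    log_div hp.ne' hd.ne', log_div (by positivity : s * R * d ≠ 0) hq.ne',
    log_mul (by positivity : s * R ≠ 0) hd.ne']
  field_simp
  ring

theorem stmt_14_general (d q s : ℕ) (hd : 1 ≤ d) (hs : 1 ≤ s)
    (hqs : s + d ≤ q) (R : ℝ) (hR : 0 < R) (ε : ℝ) (hε : ε = (s : ℝ) / q) :
    R ^ (2 * s) * (Real.Gamma ((s : ℝ) + 1)) ^ 2 * Phi d q s
      ≤ Real.exp 1 ^ 2 * (Real.exp 1 / Real.sqrt (2 * Real.pi)) ^ d * (q : ℝ) *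
          (((1 - ε) ^ (1 - ε) / (1 + ε) ^ (1 + ε)) * (ε * R * d) ^ (2 * ε)) ^ (q : ℕ) := by
  subst hε
  have hd1 : (1 : ℝ) ≤ d := by exact_mod_cast hd
  have hs1 : (1 : ℝ) ≤ s := by exact_mod_cast hs
  have hsdq : (s : ℝ) + d ≤ q := by exact_mod_cast hqs
  have hq0 : (0 : ℝ) < q := by linarith
  have hΓ0 : 0 < Gamma (s + 1) := Gamma_pos_of_pos (by positivity)
  have hε1 : 0 < 1 - (s : ℝ) / q := by rw [sub_pos, div_lt_one (by linarith)]; linarith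
  have hΦ0 : 0 < Phi d q s := Phi_pos_s14 (by rw [abs_of_nonneg (by linarith)]; linarith)
  have hΦ := log_Phi_le_s14 (by omega) (by linarith) hsdq
  have hΓs := log_Gamma_add_one_le hs1
  have hlog_sq : log s ≤ log q := log_le_log (by linarith) (by linarith)
  have hlog_ab : log ((q - s) / d : ℝ) ≤ log ((q + s) / d) :=
    log_le_log (div_pos (by linarith) (by linarith)) (by gcongr; linarith)
  rw [← log_le_log_iff (by positivity) (by positivity), log_mul (by positivity) hΦ0.ne',
    log_mul (by positivity) (by positivity), log_mul (by positivity) (by positivity),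
    log_mul (by positivity) (by positivity), log_mul (by positivity) (by positivity)]
  simp only [log_pow, log_exp, Nat.cast_ofNat, Nat.cast_mul]
  rw [log_div (exp_pos 1).ne' (by positivity), log_exp,
    mul_log_entropy_factor (by linarith) (by linarith) hR (by linarith),
    log_mul (by positivity) hR.ne']
  linear_combination 2 * hΓs + hΦ + hlog_sq + ((d : ℝ) / 2) * hlog_ab

theorem stmt_14 (d q s : ℕ) (hd : 1 ≤ d) (hq : 1 ≤ q) (hs : 1 ≤ s)
    (hqs : s + d ≤ q) (R : ℝ) (hR : 0 < R) (ε : ℝ) (hε : ε = (s : ℝ) / q) :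
    R ^ (2 * s) * (Real.Gamma ((s : ℝ) + 1)) ^ 2 * Phi d q s
      ≤ Real.exp 1 ^ 2 * (Real.exp 1 / Real.sqrt (2 * Real.pi)) ^ d * (q : ℝ) *
          (((1 - ε) ^ (1 - ε) / (1 + ε) ^ (1 + ε)) * (ε * R * d) ^ (2 * ε)) ^ (q : ℕ) :=
  stmt_14_general d q s hd hs hqs R hR ε hε

end
end
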